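/- arXiv:2410.04308 — 2 statements merged into one kernel-verified Lean document; each statement's English description precedes it below -/
import Mathlib

section
/- Let B be a finite Blaschke product of degree n and q ∈ [1, ∞). Then for every r ∈ (0,1), ∫₀^{2π} |B'(re^{it})|^q dt ≤ 2πn / (1 - r²)^{q-1}. -/
open Complex Metric MeasureTheory Real Set
open scoped Classical NNReal ENNReal

noncomputable def circInt (f : ℂ → ℂ) (p r : ℝ) : ℝ :=
  (∫ t in (0:ℝ)..(2*π), ‖f ((r : ℂ) * Complex.exp (t * Complex.I))‖ ^ p) / (2*π)

noncomputable def hardyNorm (p : ℝ) (f : ℂ → ℂ) : ℝ :=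
  ⨆ r : Ioo (0:ℝ) 1, (circInt f p (r : ℝ)) ^ (1/p)

/-- `f` belongs to the Hardy space `H^p` of the unit disk. -/
def MemHp (p : ℝ) (f : ℂ → ℂ) : Prop :=
  DifferentiableOn ℂ f (ball (0:ℂ) 1) ∧
    BddAbove (range fun r : Ioo (0:ℝ) 1 => (circInt f p (r : ℝ)) ^ (1/p))

noncomputable def supNorm (f : ℂ → ℂ) : ℝ := ⨆ z : ball (0:ℂ) 1, ‖f (z : ℂ)‖

/-- `f` belongs to `H^∞` of the unit disk. -/
def MemHinf (f : ℂ → ℂ) : Prop :=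
  DifferentiableOn ℂ f (ball (0:ℂ) 1) ∧ BddAbove (range fun z : ball (0:ℂ) 1 => ‖f (z : ℂ)‖)

/-- Number of solutions of `f z = w` in the unit disk, counted with multiplicity. -/
noncomputable def valCount (f : ℂ → ℂ) (w : ℂ) : ℝ≥0∞ :=
  ∑' z : ball (0:ℂ) 1,
    if h : AnalyticAt ℂ (fun ζ => f ζ - w) (z : ℂ) then (analyticOrderAt (fun ζ => f ζ - w) (z : ℂ) : ℝ≥0∞) else 0

/-- `f` is mean `n`-valent in the unit disk. -/
def MeanValent (n : ℝ) (f : ℂ → ℂ) : Prop :=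
  ∀ R > 0, (1/π) * ∫ r in (0:ℝ)..R, (∫ t in (0:ℝ)..(2*π),
      (valCount f ((r : ℂ) * Complex.exp (t * Complex.I))).toReal) * r ≤ n * R^2

noncomputable def maxMod (f : ℂ → ℂ) (r : ℝ) : ℝ := ⨆ z : sphere (0:ℂ) r, ‖f (z : ℂ)‖

/-- `B` is a finite Blaschke product of degree `n`. -/
def IsBlaschke (n : ℕ) (B : ℂ → ℂ) : Prop :=
  ∃ (c : ℂ) (a : Fin n → ℂ), ‖c‖ = 1 ∧ (∀ k, ‖a k‖ < 1) ∧
    ∀ z, B z = c * ∏ k, (z - a k) / (1 - (starRingEnd ℂ) (a k) * z)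

/-- `g` coincides on the unit disk with a rational function of degree at most `n`
whose poles lie outside the closed unit disk. -/
def IsRatOut (n : ℕ) (g : ℂ → ℂ) : Prop :=
  ∃ P Q : Polynomial ℂ, P.natDegree ≤ n ∧ Q.natDegree ≤ n ∧
    (∀ z : ℂ, ‖z‖ ≤ 1 → Q.eval z ≠ 0) ∧ ∀ z ∈ ball (0:ℂ) 1, g z = P.eval z / Q.eval z

/-!
Write `B = c ∏ φₖ` with `φₐ(z) = (z - a) / (1 - ā z)`. By the product rule `|B'| ≤ ∑ |φₖ'|`, and on
`|z| = r` each `|φₖ'(z)| = (1 - |aₖ|²) / |1 - āₖ z|²` is at most the Poisson kernel of the point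
`r aₖ`, whose integral over the unit circle is `2π`. On the other hand the identity
`|φₐ'(z)| (1 - |z|²) = 1 - |φₐ(z)|²` survives taking products as the Schwarz–Pick inequality
`|B'(z)| (1 - |z|²) ≤ 1 - |B(z)|²`, so `|B'| ≤ 1 / (1 - r²)`. Now estimate
`|B'|^q = |B'|^(q-1) |B'|` by the second bound in the first factor and the first in the second.
-/

section FiniteProduct

variable {ι : Type*} [DecidableEq ι] {s : Finset ι}

lemma sum_one_sub_sq_mul_prod_erase_le (x : ι → ℝ) (h0 : ∀ i ∈ s, 0 ≤ x i)
    (h1 : ∀ i ∈ s, x i ≤ 1) :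
    ∑ i ∈ s, (1 - x i ^ 2) * ∏ j ∈ s.erase i, x j ≤ 1 - (∏ i ∈ s, x i) ^ 2 := by
  induction s using Finset.induction_on with
  | empty => simp
  | insert b s hb ih =>
    have hx0 : 0 ≤ x b := h0 b (Finset.mem_insert_self b s)
    have hx1 : x b ≤ 1 := h1 b (Finset.mem_insert_self b s)
    have hP0 : 0 ≤ ∏ j ∈ s, x j :=
      Finset.prod_nonneg fun i hi => h0 i (Finset.mem_insert_of_mem hi)
    have hP1 : ∏ j ∈ s, x j ≤ 1 :=
      Finset.prod_le_one (fun i hi => h0 i (Finset.mem_insert_of_mem hi))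
        fun i hi => h1 i (Finset.mem_insert_of_mem hi)
    have hS := ih (fun i hi => h0 i (Finset.mem_insert_of_mem hi))
      fun i hi => h1 i (Finset.mem_insert_of_mem hi)
    have herase : ∀ i ∈ s, ∏ j ∈ (insert b s).erase i, x j = x b * ∏ j ∈ s.erase i, x j := by
      intro i hi
      rw [Finset.erase_insert_of_ne (ne_of_mem_of_not_mem hi hb).symm,
        Finset.prod_insert fun h => hb (Finset.mem_of_mem_erase h)]
    rw [Finset.sum_insert hb, Finset.prod_insert hb, Finset.erase_insert hb,
      Finset.sum_congr rfl fun i hi => by rw [herase i hi, mul_left_comm], ← Finset.mul_sum]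
    nlinarith [mul_le_mul_of_nonneg_left hS hx0, mul_nonneg (mul_nonneg (sub_nonneg.2 hx1)
      (sub_nonneg.2 hP1)) (sub_nonneg.2 (mul_le_one₀ hx1 hP0 hP1))]

variable {𝕜 : Type*} [NormedField 𝕜] {u v : ι → 𝕜}

lemma norm_sum_prod_erase_mul_le (hu : ∀ i ∈ s, ‖u i‖ ≤ 1) :
    ‖∑ i ∈ s, (∏ j ∈ s.erase i, u j) * v i‖ ≤ ∑ i ∈ s, ‖v i‖ := by
  refine (norm_sum_le _ _).trans (Finset.sum_le_sum fun i _ => ?_)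
  rw [norm_mul, norm_prod]
  exact mul_le_of_le_one_left (norm_nonneg _) (Finset.prod_le_one (fun _ _ => norm_nonneg _)
    fun j hj => hu j (Finset.mem_of_mem_erase hj))

/-- With `uᵢ = fᵢ z` and `vᵢ = fᵢ' z` the sum is `(∏ᵢ fᵢ)' z`: bounds of Schwarz–Pick type
`‖f'‖ ≤ C (1 - ‖f‖²)` pass from the factors to the product. -/
lemma norm_sum_prod_erase_mul_le_mul_one_sub_sq {C : ℝ} (hC : 0 ≤ C)
    (hu : ∀ i ∈ s, ‖u i‖ ≤ 1) (hv : ∀ i ∈ s, ‖v i‖ ≤ C * (1 - ‖u i‖ ^ 2)) :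
    ‖∑ i ∈ s, (∏ j ∈ s.erase i, u j) * v i‖ ≤ C * (1 - ‖∏ i ∈ s, u i‖ ^ 2) := by
  calc ‖∑ i ∈ s, (∏ j ∈ s.erase i, u j) * v i‖
      ≤ ∑ i ∈ s, (∏ j ∈ s.erase i, ‖u j‖) * (C * (1 - ‖u i‖ ^ 2)) := by
        refine (norm_sum_le _ _).trans (Finset.sum_le_sum fun i hi => ?_)
        rw [norm_mul, norm_prod]
        exact mul_le_mul_of_nonneg_left (hv i hi) (Finset.prod_nonneg fun _ _ => norm_nonneg _)
    _ = C * ∑ i ∈ s, (1 - ‖u i‖ ^ 2) * ∏ j ∈ s.erase i, ‖u j‖ := by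
        rw [Finset.mul_sum]
        exact Finset.sum_congr rfl fun i _ => by ring
    _ ≤ C * (1 - ‖∏ i ∈ s, u i‖ ^ 2) := by
        rw [norm_prod]
        exact mul_le_mul_of_nonneg_left
          (sum_one_sub_sq_mul_prod_erase_le _ (fun _ _ => norm_nonneg _) hu) hC

end FiniteProduct

lemma rpow_le_rpow_sub_one_mul {x M S q : ℝ} (hx : 0 ≤ x) (hxM : x ≤ M) (hxS : x ≤ S)
    (hq : 1 ≤ q) : x ^ q ≤ M ^ (q - 1) * S :=
  calc x ^ q = x ^ (q - 1) * x := by rw [← rpow_add_one' hx (by linarith), sub_add_cancel]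
    _ ≤ M ^ (q - 1) * S :=
      mul_le_mul (rpow_le_rpow hx hxM (by linarith)) hxS hx (rpow_nonneg (hx.trans hxM) _)

lemma intervalIntegral.integral_mono_of_nonneg {f g : ℝ → ℝ} {a b : ℝ} (hab : a ≤ b)
    (hf : ∀ t, 0 ≤ f t) (hg : IntervalIntegrable g volume a b) (hfg : ∀ t, f t ≤ g t) :
    ∫ t in a..b, f t ≤ ∫ t in a..b, g t := by
  simp only [intervalIntegral.integral_of_le hab]
  exact MeasureTheory.integral_mono_of_nonneg (ae_of_all _ hf) hg.1 (ae_of_all _ hfg)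

section PoissonKernel

variable {w : ℂ}

lemma intervalIntegrable_poissonKernel_exp (hw : ‖w‖ < 1) :
    IntervalIntegrable (fun t : ℝ => poissonKernel 0 w (exp (t * I))) volume 0 (2 * π) := by
  have hcont : ContinuousOn (poissonKernel 0 w) (sphere 0 |1|) := by
    rw [poissonKernel_eq_re_herglotzRieszKernel]
    exact continuous_re.comp_continuousOn
      (continuousOn_herglotzRieszKernel_sphere (by simpa using hw))
  simpa [CircleIntegrable, circleMap] using hcont.circleIntegrable'

lemma integral_poissonKernel_exp (hw : ‖w‖ < 1) :
    ∫ t in (0 : ℝ)..(2 * π), poissonKernel 0 w (exp (t * I)) = 2 * π := by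
  have h := InnerProductSpace.HarmonicContOnCl.circleAverage_poissonKernel_smul
    (InnerProductSpace.harmonicContOnCl_const (c := (1 : ℝ))) (show w ∈ ball 0 1 by simpa using hw)
  rw [circleAverage_def, smul_eq_mul, inv_mul_eq_iff_eq_mul₀ two_pi_pos.ne', mul_one] at h
  simpa [circleMap] using h

end PoissonKernel

open ComplexConjugate

noncomputable def blaschkeFactor (a z : ℂ) : ℂ := (z - a) / (1 - conj a * z)

section BlaschkeFactor

variable {a z : ℂ}

lemma one_sub_conj_mul_ne_zero (ha : ‖a‖ < 1) (hz : ‖z‖ ≤ 1) : 1 - conj a * z ≠ 0 := by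
  have hlt : ‖conj a * z‖ < 1 := by
    rw [norm_mul, RCLike.norm_conj]
    nlinarith [norm_nonneg a, norm_nonneg z]
  refine sub_ne_zero.2 fun h => ?_
  rw [← h, norm_one] at hlt
  exact lt_irrefl _ hlt

lemma norm_one_sub_conj_mul_sq_sub_norm_sub_sq (a z : ℂ) :
    ‖1 - conj a * z‖ ^ 2 - ‖z - a‖ ^ 2 = (1 - ‖a‖ ^ 2) * (1 - ‖z‖ ^ 2) := by
  simp only [← normSq_eq_norm_sq, normSq_apply, sub_re, sub_im, mul_re, mul_im, one_re, one_im,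
    conj_re, conj_im]
  ring

lemma norm_blaschkeFactor_le_one (ha : ‖a‖ < 1) (hz : ‖z‖ ≤ 1) : ‖blaschkeFactor a z‖ ≤ 1 := by
  rw [blaschkeFactor, norm_div, div_le_one (norm_pos_iff.2 (one_sub_conj_mul_ne_zero ha hz)),
    ← pow_le_pow_iff_left₀ (norm_nonneg _) (norm_nonneg _) two_ne_zero]
  have hid := norm_one_sub_conj_mul_sq_sub_norm_sub_sq a z
  have hpos : 0 ≤ (1 - ‖a‖ ^ 2) * (1 - ‖z‖ ^ 2) := by
    apply mul_nonneg <;> nlinarith [norm_nonneg a, norm_nonneg z]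
  linarith

lemma hasDerivAt_blaschkeFactor (h : 1 - conj a * z ≠ 0) :
    HasDerivAt (blaschkeFactor a) (((1 - ‖a‖ ^ 2 : ℝ) : ℂ) / (1 - conj a * z) ^ 2) z := by
  have hden : HasDerivAt (fun w => 1 - conj a * w) (-conj a) z := by
    simpa using ((hasDerivAt_id z).const_mul (conj a)).const_sub 1
  refine (((hasDerivAt_id z).sub_const a).div hden h).congr_deriv ?_
  have hnorm : ((‖a‖ ^ 2 : ℝ) : ℂ) = conj a * a := by
    rw [mul_comm, mul_conj, normSq_eq_norm_sq]
  push_cast at hnorm ⊢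
  rw [hnorm, id]
  ring

lemma norm_deriv_blaschkeFactor (ha : ‖a‖ < 1) (hz : ‖z‖ ≤ 1) :
    ‖deriv (blaschkeFactor a) z‖ = (1 - ‖a‖ ^ 2) / ‖1 - conj a * z‖ ^ 2 := by
  rw [(hasDerivAt_blaschkeFactor (one_sub_conj_mul_ne_zero ha hz)).deriv, norm_div, norm_pow,
    norm_real, Real.norm_of_nonneg (by nlinarith [norm_nonneg a])]

/-- The Schwarz–Pick inequality, which is an equality for a single factor. -/
lemma norm_deriv_blaschkeFactor_mul (ha : ‖a‖ < 1) (hz : ‖z‖ ≤ 1) :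
    ‖deriv (blaschkeFactor a) z‖ * (1 - ‖z‖ ^ 2) = 1 - ‖blaschkeFactor a z‖ ^ 2 := by
  have hden := norm_pos_iff.2 (one_sub_conj_mul_ne_zero ha hz)
  rw [norm_deriv_blaschkeFactor ha hz, blaschkeFactor, norm_div, div_pow]
  field_simp
  linarith [norm_one_sub_conj_mul_sq_sub_norm_sub_sq a z]

lemma norm_deriv_blaschkeFactor_le_poissonKernel (ha : ‖a‖ < 1) {r : ℝ} (hr : |r| ≤ 1) {ζ : ℂ}
    (hζ : ‖ζ‖ = 1) : ‖deriv (blaschkeFactor a) (r * ζ)‖ ≤ poissonKernel 0 (r * a) ζ := by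
  have hrζ : ‖(r : ℂ) * ζ‖ ≤ 1 := by rwa [norm_mul, hζ, mul_one, norm_real, Real.norm_eq_abs]
  have hden : ‖1 - conj a * (r * ζ)‖ = ‖ζ - r * a‖ := by
    have hζζ : ζ * conj ζ = 1 := by rw [mul_conj, normSq_eq_norm_sq, hζ]; simp
    rw [show 1 - conj a * (r * ζ) = ζ * conj (ζ - r * a) by
      simp only [map_sub, map_mul, conj_ofReal]; linear_combination hζζ.symm,
      norm_mul, hζ, one_mul, RCLike.norm_conj]
  rw [norm_deriv_blaschkeFactor ha hrζ, hden, poissonKernel, sub_zero, sub_zero, hζ,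
    norm_mul, norm_real, Real.norm_eq_abs, one_pow]
  gcongr
  exact mul_le_of_le_one_left (norm_nonneg a) hr

end BlaschkeFactor

section BlaschkeProduct

variable {ι : Type*} [DecidableEq ι] {s : Finset ι} {a : ι → ℂ} {z : ℂ}

lemma hasDerivAt_prod_blaschkeFactor (ha : ∀ i ∈ s, ‖a i‖ < 1) (hz : ‖z‖ ≤ 1) :
    HasDerivAt (fun w => ∏ i ∈ s, blaschkeFactor (a i) w)
      (∑ i ∈ s, (∏ j ∈ s.erase i, blaschkeFactor (a j) z) * deriv (blaschkeFactor (a i)) z) z := by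
  simpa only [smul_eq_mul] using HasDerivAt.fun_finsetProd fun i hi =>
    (hasDerivAt_blaschkeFactor (one_sub_conj_mul_ne_zero (ha i hi) hz)).differentiableAt.hasDerivAt

lemma norm_deriv_prod_blaschkeFactor_le_sum (ha : ∀ i ∈ s, ‖a i‖ < 1) (hz : ‖z‖ ≤ 1) :
    ‖deriv (fun w => ∏ i ∈ s, blaschkeFactor (a i) w) z‖ ≤
      ∑ i ∈ s, ‖deriv (blaschkeFactor (a i)) z‖ := by
  rw [(hasDerivAt_prod_blaschkeFactor ha hz).deriv]
  exact norm_sum_prod_erase_mul_le fun i hi => norm_blaschkeFactor_le_one (ha i hi) hz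

lemma norm_deriv_prod_blaschkeFactor_le_inv (ha : ∀ i ∈ s, ‖a i‖ < 1) (hz : ‖z‖ < 1) :
    ‖deriv (fun w => ∏ i ∈ s, blaschkeFactor (a i) w) z‖ ≤ (1 - ‖z‖ ^ 2)⁻¹ := by
  have hz2 : 0 < 1 - ‖z‖ ^ 2 := by nlinarith [norm_nonneg z]
  have hC : 0 ≤ (1 - ‖z‖ ^ 2)⁻¹ := inv_nonneg.2 hz2.le
  rw [(hasDerivAt_prod_blaschkeFactor ha hz.le).deriv]
  refine (norm_sum_prod_erase_mul_le_mul_one_sub_sq hC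
    (fun i hi => norm_blaschkeFactor_le_one (ha i hi) hz.le) fun i hi => ?_).trans
    (mul_le_of_le_one_right hC (sub_le_self _ (sq_nonneg _)))
  rw [← norm_deriv_blaschkeFactor_mul (ha i hi) hz.le, mul_comm _ (1 - ‖z‖ ^ 2),
    inv_mul_cancel_left₀ hz2.ne']

lemma norm_deriv_const_mul_prod_blaschkeFactor_rpow_le {c : ℂ} (hc : ‖c‖ = 1)
    (ha : ∀ i ∈ s, ‖a i‖ < 1) {q r : ℝ} (hq : 1 ≤ q) (hr0 : 0 ≤ r) (hr1 : r < 1) {ζ : ℂ}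
    (hζ : ‖ζ‖ = 1) :
    ‖deriv (fun w => c * ∏ i ∈ s, blaschkeFactor (a i) w) (r * ζ)‖ ^ q ≤
      ((1 - r ^ 2)⁻¹) ^ (q - 1) * ∑ i ∈ s, poissonKernel 0 (r * a i) ζ := by
  have hz : ‖(r : ℂ) * ζ‖ = r := by rw [norm_mul, hζ, mul_one, norm_real, Real.norm_of_nonneg hr0]
  have hz1 : ‖(r : ℂ) * ζ‖ < 1 := by rwa [hz]
  rw [deriv_const_mul c (hasDerivAt_prod_blaschkeFactor ha hz1.le).differentiableAt,
    norm_mul, hc, one_mul]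
  refine rpow_le_rpow_sub_one_mul (norm_nonneg _) ?_ ?_ hq
  · simpa only [hz] using norm_deriv_prod_blaschkeFactor_le_inv ha hz1
  · exact (norm_deriv_prod_blaschkeFactor_le_sum ha hz1.le).trans <| Finset.sum_le_sum
      fun i hi => norm_deriv_blaschkeFactor_le_poissonKernel (ha i hi)
        (abs_le.2 ⟨by linarith, hr1.le⟩) hζ

end BlaschkeProduct

theorem stmt12 (n : ℕ) (B : ℂ → ℂ) (hB : IsBlaschke n B) (q : ℝ) (hq : 1 ≤ q) :
    ∀ r ∈ Ioo (0:ℝ) 1,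
      ∫ t in (0:ℝ)..(2*π), ‖deriv B ((r : ℂ) * Complex.exp (t * Complex.I))‖ ^ q ≤
        2*π*n / (1 - r^2) ^ (q-1) := by
  obtain ⟨c, a, hc, ha, hBf⟩ := hB
  obtain rfl : B = fun w => c * ∏ k, blaschkeFactor (a k) w := funext hBf
  rintro r ⟨hr0, hr1⟩
  have hra : ∀ k, ‖(r : ℂ) * a k‖ < 1 := fun k => by
    rw [norm_mul, norm_real, Real.norm_of_nonneg hr0.le]
    nlinarith [norm_nonneg (a k), ha k]
  calc _ ≤ ∫ t in (0:ℝ)..(2*π),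
          ((1 - r ^ 2)⁻¹) ^ (q - 1) * ∑ k, poissonKernel 0 (r * a k) (exp (t * I)) :=
        intervalIntegral.integral_mono_of_nonneg two_pi_pos.le (fun t => by positivity)
          (by simpa only [Finset.sum_apply] using (IntervalIntegrable.sum _ fun k _ =>
            intervalIntegrable_poissonKernel_exp (hra k)).const_mul _)
          fun t => norm_deriv_const_mul_prod_blaschkeFactor_rpow_le hc (fun k _ => ha k) hq
            hr0.le hr1 (norm_exp_ofReal_mul_I t)
    _ = ((1 - r ^ 2)⁻¹) ^ (q - 1) * (n * (2 * π)) := by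
        rw [intervalIntegral.integral_const_mul, intervalIntegral.integral_finsetSum
          fun k _ => intervalIntegrable_poissonKernel_exp (hra k)]
        simp [integral_poissonKernel_exp (hra _)]
    _ = 2 * π * n / (1 - r ^ 2) ^ (q - 1) := by
        rw [inv_rpow (by nlinarith), div_eq_mul_inv]
        ring
end

section
/- If f(z) = Σ_{k≥1} a_k z^{2^k} is analytic on the unit disk and ∫_𝔻 |f(z)| dA(z) < ∞, then Σ_{k≥1} 2^{-k} |a_k| < ∞. -/
open Complex Metric MeasureTheory Real Set
open scoped Classical NNReal ENNReal

/-!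
The lacunary series is the power series whose coefficient of `z ^ 2 ^ k` is `a k`, so Cauchy's
estimate bounds `‖a k‖ r ^ 2 ^ k` by the mean `M(r)` of `‖f‖` over the circle of radius `r`.
In polar coordinates `∫_𝔻 ‖f‖ dA = 2π ∫₀¹ r M(r) dr`. On `1 - 2^{-(k+1)} < r < 1 - 2^{-(k+2)}`
Bernoulli's inequality gives `r ^ 2 ^ k ≥ 1/2`, so this interval, of length `2^{-(k+2)}`,
contributes at least a fixed multiple of `2^{-k} ‖a k‖`, and these intervals are disjoint.
-/

open Function FormalMultilinearSeries

theorem hasSum_extend_mul_pow {R : Type*} [Semiring R] [TopologicalSpace R] {e : ℕ → ℕ}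
    (he : Injective e) {b : ℕ → R} {z s : R} (h : HasSum (fun k => b k * z ^ e k) s) :
    HasSum (fun n => extend e b 0 n * z ^ n) s := by
  rw [← hasSum_extend_zero he] at h
  convert h using 1
  ext n
  by_cases hn : ∃ k, e k = n
  · obtain ⟨k, rfl⟩ := hn
    simp only [he.extend_apply]
  · simp only [extend_apply' _ _ _ hn, Pi.zero_apply, zero_mul]

theorem hasFPowerSeriesOnBall_ofScalars {f : ℂ → ℂ} {c : ℕ → ℂ} {R : ℝ≥0} (hR : 0 < R)
    (hf : ∀ z ∈ ball (0 : ℂ) R, HasSum (fun n => c n * z ^ n) (f z)) :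
    HasFPowerSeriesOnBall f (ofScalars ℂ c) 0 R where
  r_le := by
    refine ENNReal.le_of_forall_nnreal_lt fun r hr => (ofScalars ℂ c).le_radius_of_tendsto
      (l := 0) ?_
    have hr' : (r : ℂ) ∈ ball (0 : ℂ) R := by simpa using hr
    simpa [ofScalars_norm] using (hf _ hr').summable.tendsto_atTop_zero.norm
  r_pos := by simpa using hR
  hasSum {y} hy := by
    rw [Metric.eball_coe] at hy
    simpa [ofScalars_apply_eq, mul_comm] using hf y hy

theorem norm_mul_pow_le_circleAverage {f : ℂ → ℂ} {c : ℕ → ℂ} {R : ℝ≥0∞}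
    (hf : HasFPowerSeriesOnBall f (ofScalars ℂ c) 0 R) {r : ℝ} (hr0 : 0 < r)
    (hrR : ENNReal.ofReal r < R) (n : ℕ) :
    ‖c n‖ * r ^ n ≤ circleAverage (fun z => ‖f z‖) 0 r := by
  lift r to ℝ≥0 using hr0.le
  rw [ENNReal.ofReal_coe_nnreal] at hrR
  have hcauchy : HasFPowerSeriesOnBall f (cauchyPowerSeries f 0 r) 0 r := by
    refine DifferentiableOn.hasFPowerSeriesOnBall (hf.differentiableOn.mono fun z hz => ?_)
      (mod_cast hr0)
    rw [Metric.mem_eball, edist_zero_right]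
    exact lt_of_le_of_lt (by simpa [← NNReal.coe_le_coe] using hz) hrR
  have hle := norm_cauchyPowerSeries_le f 0 r n
  rw [← hf.hasFPowerSeriesAt.eq_formalMultilinearSeries hcauchy.hasFPowerSeriesAt, ofScalars_norm,
    NNReal.abs_eq, inv_pow, ← div_eq_mul_inv, le_div_iff₀ (by positivity)] at hle
  simpa [circleAverage_def] using hle

theorem lintegral_enorm_circleMap_eq_circleAverage {E : Type*} [NormedAddCommGroup E]
    {g : ℂ → E} {c : ℂ} {r : ℝ} (hg : ContinuousOn g (sphere c |r|)) :
    ∫⁻ θ in Ioo (-π) π, ‖g (circleMap c r θ)‖ₑ =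
      ENNReal.ofReal (2 * π * circleAverage (fun z => ‖g z‖) c r) := by
  have hcont : Continuous fun θ => g (circleMap c r θ) :=
    hg.comp_continuous (continuous_circleMap c r) (circleMap_mem_sphere' c r)
  rw [circleAverage_eq_integral_add (-π), smul_eq_mul, mul_inv_cancel_left₀ (by positivity),
    intervalIntegral.integral_comp_add_right (fun θ => ‖g (circleMap c r θ)‖), zero_add,
    show 2 * π + -π = π by ring, intervalIntegral.integral_of_le (by linarith [pi_pos]),
    ofReal_integral_norm_eq_lintegral_enorm hcont.integrableOn_Ioc]
  exact setLIntegral_congr Ioo_ae_eq_Ioc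

theorem ofReal_two_pi_mul_norm_mul_pow_le_lintegral_circleMap {f : ℂ → ℂ} {c : ℕ → ℂ}
    {R : ℝ≥0∞} (hf : HasFPowerSeriesOnBall f (ofScalars ℂ c) 0 R) {r : ℝ} (hr0 : 0 < r)
    (hrR : ENNReal.ofReal r < R) (n : ℕ) :
    ENNReal.ofReal (2 * π * (‖c n‖ * r ^ n)) ≤ ∫⁻ θ in Ioo (-π) π, ‖f (circleMap 0 r θ)‖ₑ := by
  have hsphere : sphere (0 : ℂ) |r| ⊆ Metric.eball 0 R := fun z hz => by
    rw [Metric.mem_eball, edist_zero_right, ← ofReal_norm]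
    simpa [abs_of_pos hr0, mem_sphere_zero_iff_norm.1 hz] using hrR
  rw [lintegral_enorm_circleMap_eq_circleAverage (hf.continuousOn.mono hsphere)]
  gcongr
  exact norm_mul_pow_le_circleAverage hf hr0 hrR n

theorem polarCoord_symm_eq_circleMap (p : ℝ × ℝ) :
    Complex.polarCoord.symm p = circleMap 0 p.1 p.2 := by
  simp [circleMap, Complex.exp_mul_I, ← Complex.ofReal_cos, ← Complex.ofReal_sin]

theorem lintegral_ball_eq_lintegral_circleMap {g : ℂ → ℝ≥0∞} {R : ℝ}
    (hg : ContinuousOn g (ball (0 : ℂ) R)) :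
    ∫⁻ z in ball (0 : ℂ) R, g z =
      ∫⁻ r in Ioo 0 R, ENNReal.ofReal r * ∫⁻ θ in Ioo (-π) π, g (circleMap 0 r θ) := by
  have hind : Measurable ((ball (0 : ℂ) R).indicator g) := by
    rw [← piecewise_eq_indicator]
    exact hg.measurable_piecewise continuousOn_const measurableSet_ball
  have hmeas : Measurable fun p : ℝ × ℝ => (ball (0 : ℂ) R).indicator g (circleMap 0 p.1 p.2) :=
    hind.comp (by unfold circleMap; fun_prop)
  rw [← lintegral_indicator measurableSet_ball, ← Complex.lintegral_comp_polarCoord_symm,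
    polarCoord_target, Measure.volume_eq_prod]
  simp_rw [polarCoord_symm_eq_circleMap, smul_eq_mul]
  rw [setLIntegral_prod _ (by fun_prop),
    ← inter_eq_left.2 (Ioo_subset_Ioi_self : Ioo (0 : ℝ) R ⊆ Ioi 0),
    ← setLIntegral_indicator measurableSet_Ioo]
  refine setLIntegral_congr_fun measurableSet_Ioi fun r (hr : 0 < r) => ?_
  by_cases hrR : r < R
  · have hmem : ∀ θ, circleMap 0 r θ ∈ ball (0 : ℂ) R := fun θ => by
      simpa [abs_of_pos hr] using hrR
    simp only [indicator_of_mem (show r ∈ Ioo 0 R from ⟨hr, hrR⟩), indicator_of_mem (hmem _)]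
    exact lintegral_const_mul' _ _ ENNReal.ofReal_ne_top
  · have hmem : ∀ θ, circleMap 0 r θ ∉ ball (0 : ℂ) R := fun θ => by
      simpa [abs_of_pos hr] using hrR
    simp [indicator_of_notMem (show r ∉ Ioo 0 R from fun h => hrR h.2), hmem]

theorem half_le_pow_of_one_sub_le {k : ℕ} {r : ℝ} (hr : 1 - 2⁻¹ ^ (k + 2) ≤ r) :
    2⁻¹ ≤ r ^ 2 ^ (k + 1) := by
  have hx1 : (2 : ℝ)⁻¹ ^ (k + 2) ≤ 1 := pow_le_one₀ (by norm_num) (by norm_num)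
  have hbern := one_add_mul_le_pow (a := -(2⁻¹ ^ (k + 2) : ℝ)) (by linarith) (2 ^ (k + 1))
  have hhalf : 1 + ((2 ^ (k + 1) : ℕ) : ℝ) * -(2⁻¹ ^ (k + 2)) = 2⁻¹ := by
    push_cast
    rw [inv_pow]
    field_simp
    ring
  rw [hhalf, ← sub_eq_add_neg] at hbern
  exact hbern.trans (pow_le_pow_left₀ (by linarith) hr _)

theorem Ioo_one_sub_inv_two_pow_subset (k : ℕ) :
    Ioo (1 - 2⁻¹ ^ (k + 2) : ℝ) (1 - 2⁻¹ ^ (k + 3)) ⊆ Ioo 2⁻¹ 1 := fun r hr => by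
  have h0 : (2 : ℝ)⁻¹ ^ (k + 2) ≤ 2⁻¹ ^ 2 :=
    pow_le_pow_of_le_one (by norm_num) (by norm_num) (by omega)
  have h1 : (0 : ℝ) < 2⁻¹ ^ (k + 3) := by positivity
  norm_num at h0
  exact ⟨by linarith [hr.1], by linarith [hr.2]⟩

theorem ofReal_div_two_pow_le_setLIntegral {h : ℝ → ℝ≥0∞} {b : ℝ} (hb0 : 0 ≤ b) {k : ℕ}
    (hb : ∀ r ∈ Ioo (0 : ℝ) 1, ENNReal.ofReal (b * r ^ 2 ^ (k + 1)) ≤ h r) :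
    ENNReal.ofReal (b / 2 ^ k / 32) ≤
      ∫⁻ r in Ioo (1 - 2⁻¹ ^ (k + 2)) (1 - 2⁻¹ ^ (k + 3)), ENNReal.ofReal r * h r := by
  set J : Set ℝ := Ioo (1 - 2⁻¹ ^ (k + 2)) (1 - 2⁻¹ ^ (k + 3)) with hJ
  have hvol : volume J = ENNReal.ofReal (2⁻¹ ^ (k + 3)) := by
    rw [hJ, Real.volume_Ioo]
    congr 1
    ring
  calc ENNReal.ofReal (b / 2 ^ k / 32)
      = ENNReal.ofReal (2⁻¹ * (b * 2⁻¹)) * volume J := by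
        rw [hvol, ← ENNReal.ofReal_mul (by positivity), inv_pow]
        congr 1
        field_simp
        ring
    _ = ∫⁻ _ in J, ENNReal.ofReal (2⁻¹ * (b * 2⁻¹)) := (setLIntegral_const _ _).symm
    _ ≤ ∫⁻ r in J, ENNReal.ofReal r * h r := by
        refine setLIntegral_mono' measurableSet_Ioo fun r hr => ?_
        have hr' := Ioo_one_sub_inv_two_pow_subset k hr
        rw [ENNReal.ofReal_mul (by norm_num)]
        gcongr
        · exact hr'.1.le
        · refine le_trans (ENNReal.ofReal_le_ofReal ?_) (hb r ⟨by linarith [hr'.1], hr'.2⟩)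
          exact mul_le_mul_of_nonneg_left (half_le_pow_of_one_sub_le hr.1.le) hb0

theorem summable_div_two_pow_of_lintegral_mul_ne_top {h : ℝ → ℝ≥0∞}
    (hh : ∫⁻ r in Ioo 0 1, ENNReal.ofReal r * h r ≠ ⊤) {b : ℕ → ℝ} (hb0 : ∀ k, 0 ≤ b k)
    (hb : ∀ k, ∀ r ∈ Ioo (0 : ℝ) 1, ENNReal.ofReal (b k * r ^ 2 ^ (k + 1)) ≤ h r) :
    Summable fun k => b k / 2 ^ k := by
  set t : ℕ → ℝ := fun k => 1 - 2⁻¹ ^ (k + 2)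
  have ht_mono : Monotone t := fun k l hkl =>
    sub_le_sub_left (pow_le_pow_of_le_one (by norm_num) (by norm_num) (by omega)) 1
  have htsum : ∑' k, ENNReal.ofReal (b k / 2 ^ k / 32) ≠ ⊤ := by
    refine ne_top_of_le_ne_top hh ?_
    calc ∑' k, ENNReal.ofReal (b k / 2 ^ k / 32)
        ≤ ∑' k, ∫⁻ r in Ioo (t k) (t (k + 1)), ENNReal.ofReal r * h r :=
          ENNReal.tsum_le_tsum fun k => ofReal_div_two_pow_le_setLIntegral (hb0 k) (hb k)
      _ = ∫⁻ r in ⋃ k, Ioo (t k) (t (k + 1)), ENNReal.ofReal r * h r :=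
          (lintegral_iUnion (fun k => measurableSet_Ioo) ht_mono.pairwise_disjoint_on_Ioo_succ
            _).symm
      _ ≤ ∫⁻ r in Ioo 0 1, ENNReal.ofReal r * h r :=
          lintegral_mono_set (iUnion_subset fun k => (Ioo_one_sub_inv_two_pow_subset k).trans
            (Ioo_subset_Ioo_left (by norm_num)))
  refine ((ENNReal.summable_toReal htsum).mul_left 32).congr fun k => ?_
  rw [ENNReal.toReal_ofReal (by have := hb0 k; positivity)]
  ring

theorem stmt14 (f : ℂ → ℂ) (a : ℕ → ℂ)
    (hf : ∀ z ∈ ball (0:ℂ) 1, HasSum (fun k : ℕ => a (k+1) * z ^ (2^(k+1))) (f z))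
    (hint : ∫⁻ z in ball (0:ℂ) 1, (‖f z‖₊ : ℝ≥0∞) < ⊤) :
    Summable fun k : ℕ => (2:ℝ) ^ (-((k:ℝ)+1)) * ‖a (k+1)‖ := by
  set e : ℕ → ℕ := fun k => 2 ^ (k + 1)
  have he : Injective e := fun k l hkl => by simpa [e] using Nat.pow_right_injective le_rfl hkl
  have hps : HasFPowerSeriesOnBall f (ofScalars ℂ (extend e (fun k => a (k + 1)) 0)) 0 (1 : ℝ≥0) :=
    hasFPowerSeriesOnBall_ofScalars one_pos fun z hz =>
      hasSum_extend_mul_pow he (hf z (by simpa using hz))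
  have hcont : ContinuousOn f (ball 0 1) := by
    simpa using Metric.eball_coe (x := (0 : ℂ)) (ε := 1) ▸ hps.continuousOn
  have hsum := summable_div_two_pow_of_lintegral_mul_ne_top
    (h := fun r => ∫⁻ θ in Ioo (-π) π, ‖f (circleMap 0 r θ)‖ₑ)
    (b := fun k => 2 * π * ‖a (k + 1)‖)
    (by rw [← lintegral_ball_eq_lintegral_circleMap hcont.enorm]; exact hint.ne)
    (fun k => by positivity) fun k r hr => by
      simpa [he.extend_apply, mul_assoc] using
        ofReal_two_pi_mul_norm_mul_pow_le_lintegral_circleMap hps hr.1 (by simpa using hr.2) (e k)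
  refine (hsum.mul_left (4 * π)⁻¹).congr fun k => ?_
  rw [Real.rpow_neg zero_le_two, show (k : ℝ) + 1 = ((k + 1 : ℕ) : ℝ) by push_cast; ring,
    Real.rpow_natCast]
  field_simp
  ring
end
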